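/- arXiv:1208.5861 — 2 statements merged into one kernel-verified Lean document; each statement's English description precedes it below -/
import Mathlib

section
/- Let L be the 4-dimensional simple 3-Lie algebra A₄ over an algebraically closed field of characteristic 0, with basis e₁,e₂,e₃,e₄ and multiplication [e₁,e₂,e₃]=e₄, [e₁,e₂,e₄]=−e₃ etc. (i.e., [e_{σ(1)},e_{σ(2)},e_{σ(3)}] = ±e_{σ(4)}). Then the maximal dimension of an abelian subalgebra of L is 2. -/
open Module

/-- A 3-Lie algebra structure on a vector space `L` over `F`: a trilinear,
fully alternating bracket satisfying the fundamental (generalized Jacobi) identity. -/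
structure ThreeLie (F : Type*) [Field F] (L : Type*) [AddCommGroup L] [Module F L] where
  br : L →ₗ[F] L →ₗ[F] L →ₗ[F] L
  alt₁₂ : ∀ x z : L, br x x z = 0
  alt₂₃ : ∀ x y : L, br x y y = 0
  fund : ∀ x₁ x₂ x₃ y₂ y₃ : L,
    br (br x₁ x₂ x₃) y₂ y₃ =
      br (br x₁ y₂ y₃) x₂ x₃ + br x₁ (br x₂ y₂ y₃) x₃ + br x₁ x₂ (br x₃ y₂ y₃)

namespace ThreeLie

variable {F : Type*} [Field F] {L : Type*} [AddCommGroup L] [Module F L] (T : ThreeLie F L)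

/-- `I` is an ideal: `[I, L, L] ⊆ I`. -/
def IsIdeal (I : Submodule F L) : Prop := ∀ a ∈ I, ∀ x y : L, T.br a x y ∈ I

/-- `I` is an abelian ideal: an ideal with `[I, I, L] = 0`. -/
def IsAbelianIdeal (I : Submodule F L) : Prop :=
  T.IsIdeal I ∧ ∀ a ∈ I, ∀ b ∈ I, ∀ x : L, T.br a b x = 0

/-- `A` is an abelian subalgebra: `[A, A, A] = 0`. -/
def IsAbelianSubalgebra (A : Submodule F L) : Prop :=
  ∀ a ∈ A, ∀ b ∈ A, ∀ c ∈ A, T.br a b c = 0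

/-- `I` is a hypo-abelian ideal: an ideal with `[I,I,I] = 0` but `[I,I,L] ≠ 0`. -/
def IsHypoAbelianIdeal (I : Submodule F L) : Prop :=
  T.IsIdeal I ∧ T.IsAbelianSubalgebra I ∧ ¬ (∀ a ∈ I, ∀ b ∈ I, ∀ x : L, T.br a b x = 0)

/-- The derived algebra `L¹ = [L, L, L]`. -/
def derived : Submodule F L := Submodule.span F {z | ∃ x y w : L, z = T.br x y w}

/-- The center `Z(L)`. -/
def center : Submodule F L where
  carrier := {x | ∀ y z : L, T.br x y z = 0}
  add_mem' := by
    intro a b ha hb y z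
    simp [map_add, LinearMap.add_apply, ha y z, hb y z]
  zero_mem' := by intro y z; simp
  smul_mem' := by
    intro c a ha y z
    simp [map_smul, LinearMap.smul_apply, ha y z]

/-- The lower central series. -/
def lcs : ℕ → Submodule F L
  | 0 => ⊤
  | n + 1 => Submodule.span F {z | ∃ a ∈ lcs n, ∃ x y : L, z = T.br a x y}

/-- Nilpotency. -/
def IsNilpotent : Prop := ∃ s : ℕ, T.lcs s = ⊥

end ThreeLie

/-! Because the bracket is alternating, `[L, L, L]` is spanned by the brackets of increasing
triples of any basis. If an abelian subalgebra contained independent `a, b, c`, extend them by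
`w` to a basis: the increasing triples give `[a, b, c] = 0` and `[a, b, w]`, `[a, c, w]`,
`[b, c, w]`, so `dim [L, L, L] ≤ 3`. In `A₄` every basis vector is a bracket, so
`[L, L, L] = L` has dimension `4`. Conversely any two vectors span an abelian subalgebra, since
every bracket of them repeats an argument. -/

namespace ThreeLie

variable {F : Type*} [Field F] {L : Type*} [AddCommGroup L] [Module F L] (T : ThreeLie F L)

lemma br_swap₁₂ (x y z : L) : T.br x y z = -T.br y x z := by
  have h := T.alt₁₂ (x + y) z
  simp only [map_add, LinearMap.add_apply, T.alt₁₂, zero_add, add_zero] at h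
  exact eq_neg_of_add_eq_zero_right h

lemma br_swap₂₃ (x y z : L) : T.br x y z = -T.br x z y := by
  have h := T.alt₂₃ x (y + z)
  simp only [map_add, LinearMap.add_apply, T.alt₂₃, zero_add, add_zero] at h
  exact eq_neg_of_add_eq_zero_right h

lemma alt₁₃ (x y : L) : T.br x y x = 0 := by
  rw [T.br_swap₂₃, T.alt₁₂, neg_zero]

lemma isAbelianSubalgebra_span_pair (x y : L) :
    T.IsAbelianSubalgebra (Submodule.span F {x, y}) := by
  intro a ha b hb c hc
  obtain ⟨α₁, β₁, rfl⟩ := Submodule.mem_span_pair.1 ha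
  obtain ⟨α₂, β₂, rfl⟩ := Submodule.mem_span_pair.1 hb
  obtain ⟨α₃, β₃, rfl⟩ := Submodule.mem_span_pair.1 hc
  simp [T.alt₁₂, T.alt₂₃, T.alt₁₃]

lemma br_mem_derived (x y z : L) : T.br x y z ∈ T.derived :=
  Submodule.subset_span ⟨x, y, z, rfl⟩

lemma derived_eq_top_of_basis {ι : Type*} (e : Basis ι F L) (he : ∀ i, e i ∈ T.derived) :
    T.derived = ⊤ :=
  eq_top_iff.2 <| e.span_eq.ge.trans <| Submodule.span_le.2 <| Set.range_subset_iff.2 he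

section Span

variable {V : Submodule F L}

lemma br_mem_swap₁₂ {x y z : L} : T.br x y z ∈ V ↔ T.br y x z ∈ V := by
  rw [T.br_swap₁₂, neg_mem_iff]

lemma br_mem_swap₂₃ {x y z : L} : T.br x y z ∈ V ↔ T.br x z y ∈ V := by
  rw [T.br_swap₂₃, neg_mem_iff]

lemma br_mem_of_lt {ι : Type*} [LinearOrder ι] (v : ι → L)
    (h : ∀ i j k, i < j → j < k → T.br (v i) (v j) (v k) ∈ V) (i j k : ι) :
    T.br (v i) (v j) (v k) ∈ V := by
  rcases lt_trichotomy i j with hij | rfl | hij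
  · rcases lt_trichotomy j k with hjk | rfl | hjk
    · exact h i j k hij hjk
    · rw [T.alt₂₃]; exact V.zero_mem
    rcases lt_trichotomy i k with hik | rfl | hik
    · exact T.br_mem_swap₂₃.2 (h i k j hik hjk)
    · rw [T.alt₁₃]; exact V.zero_mem
    · exact T.br_mem_swap₂₃.2 (T.br_mem_swap₁₂.2 (h k i j hik hij))
  · rw [T.alt₁₂]; exact V.zero_mem
  · rcases lt_trichotomy i k with hik | rfl | hik
    · exact T.br_mem_swap₁₂.2 (h j i k hij hik)
    · rw [T.alt₁₃]; exact V.zero_mem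
    rcases lt_trichotomy j k with hjk | rfl | hjk
    · exact T.br_mem_swap₁₂.2 (T.br_mem_swap₂₃.2 (h j k i hjk hik))
    · rw [T.alt₂₃]; exact V.zero_mem
    · exact T.br_mem_swap₁₂.2 (T.br_mem_swap₂₃.2 (T.br_mem_swap₁₂.2 (h k j i hjk hij)))

lemma derived_le_of_basis {ι : Type*} [Fintype ι] (v : Basis ι F L)
    (h : ∀ i j k, T.br (v i) (v j) (v k) ∈ V) : T.derived ≤ V := by
  refine Submodule.span_le.2 ?_
  rintro _ ⟨x, y, z, rfl⟩
  rw [← v.sum_repr x, ← v.sum_repr y, ← v.sum_repr z]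
  simp only [map_sum, map_smul, LinearMap.sum_apply, LinearMap.smul_apply]
  exact sum_mem fun k _ => V.smul_mem _ <| sum_mem fun j _ => V.smul_mem _ <|
    sum_mem fun i _ => V.smul_mem _ (h i j k)

end Span

lemma finrank_derived_le_three (hL : finrank F L = 4) {a b c : L}
    (habc : LinearIndependent F ![a, b, c]) (hbr : T.br a b c = 0) :
    finrank F T.derived ≤ 3 := by
  have : FiniteDimensional F L := Module.finite_of_finrank_eq_succ hL
  obtain ⟨w, hw⟩ := exists_linearIndependent_snoc_of_lt_finrank habc (by omega)
  let v := basisOfLinearIndependentOfCardEqFinrank hw (by simp [hL])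
  let V := Submodule.span F (Set.range ![T.br a b w, T.br a c w, T.br b c w])
  have hV : T.derived ≤ V := by
    refine T.derived_le_of_basis v (T.br_mem_of_lt v fun i j k hij hjk => ?_)
    fin_cases i <;> fin_cases j <;> fin_cases k <;> simp at hij hjk <;> simp [v, hbr] <;>
      exact Submodule.subset_span (by simp)
  calc finrank F T.derived ≤ finrank F V := Submodule.finrank_mono hV
    _ ≤ 3 := finrank_range_le_card _

theorem finrank_le_two_of_derived_eq_top (hL : finrank F L = 4) (hT : T.derived = ⊤)
    {A : Submodule F L} (hA : T.IsAbelianSubalgebra A) : finrank F A ≤ 2 := by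
  have : FiniteDimensional F L := Module.finite_of_finrank_eq_succ hL
  by_contra! hA₃
  obtain ⟨g, hg⟩ := exists_linearIndependent_of_le_finrank hA₃
  have hind : LinearIndependent F ![(g 0 : L), g 1, g 2] := by
    have h := hg.map' A.subtype A.ker_subtype
    rwa [show A.subtype ∘ g = ![(g 0 : L), g 1, g 2] by ext i; fin_cases i <;> rfl] at h
  have := T.finrank_derived_le_three hL hind (hA _ (g 0).2 _ (g 1).2 _ (g 2).2)
  rw [hT, finrank_top] at this
  omega

end ThreeLie

theorem alpha_A4_eq_two_general {F : Type*} [Field F] {L : Type*}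
    [AddCommGroup L] [Module F L] (T : ThreeLie F L) (e : Basis (Fin 4) F L)
    (h1 : T.br (e 1) (e 2) (e 3) = e 0) (h2 : T.br (e 0) (e 2) (e 3) = e 1)
    (h3 : T.br (e 0) (e 1) (e 3) = e 2) (h4 : T.br (e 0) (e 1) (e 2) = e 3) :
    (∀ A : Submodule F L, T.IsAbelianSubalgebra A → finrank F A ≤ 2) ∧
    (∃ A : Submodule F L, T.IsAbelianSubalgebra A ∧ finrank F A = 2) := by
  have hL : finrank F L = 4 := by simp [finrank_eq_card_basis e]
  have hT : T.derived = ⊤ := T.derived_eq_top_of_basis e fun i => by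
    fin_cases i
    exacts [h1 ▸ T.br_mem_derived _ _ _, h2 ▸ T.br_mem_derived _ _ _,
      h3 ▸ T.br_mem_derived _ _ _, h4 ▸ T.br_mem_derived _ _ _]
  refine ⟨fun A hA => T.finrank_le_two_of_derived_eq_top hL hT hA,
    Submodule.span F {e 0, e 1}, T.isAbelianSubalgebra_span_pair _ _, ?_⟩
  have he : LinearIndependent F ![e 0, e 1] := by
    rw [show ![e 0, e 1] = e ∘ ![0, 1] by ext i; fin_cases i <;> rfl]
    exact e.linearIndependent.comp _ (by decide)
  rw [← Matrix.range_cons_cons_empty _ _ ![], finrank_span_eq_card he, Fintype.card_fin]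

/-- in the 4-dimensional simple 3-Lie algebra `A₄` over an algebraically
closed field of characteristic 0 (basis `e₀,…,e₃` with `[e₁,e₂,e₃]=e₀`, `[e₀,e₂,e₃]=e₁`,
`[e₀,e₁,e₃]=e₂`, `[e₀,e₁,e₂]=e₃`), the maximal dimension of an abelian subalgebra is 2. -/
theorem alpha_A4_eq_two {F : Type*} [Field F] [IsAlgClosed F] [CharZero F] {L : Type*}
    [AddCommGroup L] [Module F L] (T : ThreeLie F L) (e : Basis (Fin 4) F L)
    (h1 : T.br (e 1) (e 2) (e 3) = e 0) (h2 : T.br (e 0) (e 2) (e 3) = e 1)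
    (h3 : T.br (e 0) (e 1) (e 3) = e 2) (h4 : T.br (e 0) (e 1) (e 2) = e 3) :
    (∀ A : Submodule F L, T.IsAbelianSubalgebra A → finrank F A ≤ 2) ∧
    (∃ A : Submodule F L, T.IsAbelianSubalgebra A ∧ finrank F A = 2) :=
  alpha_A4_eq_two_general T e h1 h2 h3 h4
end

section
/- Let L be an m-dimensional 3-Lie algebra (m ≥ 4) over a field with basis x₁,…,x_m and nonzero brackets [x₁,x₂,x_i] = x_{i−1} for 4 ≤ i ≤ m (all other basis brackets zero). Then L is a nilpotent 3-Lie algebra, A = span{x₂,…,x_m} is an (m−1)-dimensional hypo-abelian ideal, I = span{x₃,…,x_m} is an (m−2)-dimensional abelian ideal, α(L) = m−1, and β(L) = m−2. -/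
open Module

/-! In the basis `x₀, …, x_{m-1}` (indices shifted down by one), the only nonzero brackets of
basis vectors are the permutations of `[x₀, x₁, x_t] = x_{t-1}`, `3 ≤ t`. Bracketing with `x_s`,
`s ≥ 2`, therefore lowers the index, which gives nilpotency, and every bracket lies in
`span {x_s | s ≥ 2}`, which makes both tails ideals; they are abelian because the index `0`
(resp. `0` and `1`) is missing from them. For the bounds, a subspace `J` of codimension at most
one with `[J, J, L] = 0` makes `L` abelian, since up to alternation every bracket in `J ⊕ F w` has
two arguments in `J`; but `[x₁, x₃, x₀] = x₂ ≠ 0`. -/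

namespace Module.Basis

variable {F : Type*} [Field F] {L : Type*} [AddCommGroup L] [Module F L] {m : ℕ}

def tailSpan (x : Basis (Fin m) F L) (c : ℕ) : Submodule F L :=
  Submodule.span F {v | ∃ i : Fin m, c ≤ (i : ℕ) ∧ v = x i}

theorem finrank_tailSpan (x : Basis (Fin m) F L) (c : ℕ) : finrank F (x.tailSpan c) = m - c := by
  let shift : Fin (m - c) → Fin m := fun j => ⟨j + c, by omega⟩
  have hshift : Function.Injective shift := fun j k h => Fin.ext (by simpa [shift] using h)
  have hrange : {v | ∃ i : Fin m, c ≤ (i : ℕ) ∧ v = x i} = Set.range (x ∘ shift) := by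
    ext v
    constructor
    · rintro ⟨i, hi, rfl⟩
      exact ⟨⟨i - c, by omega⟩, congrArg x (Fin.ext (show (i : ℕ) - c + c = i by omega))⟩
    · rintro ⟨j, rfl⟩
      exact ⟨shift j, by simp [shift], rfl⟩
  rw [tailSpan, hrange, finrank_span_eq_card (x.linearIndependent.comp shift hshift),
    Fintype.card_fin]

end Module.Basis

namespace ThreeLie

variable {F : Type*} [Field F] {L : Type*} [AddCommGroup L] [Module F L] (T : ThreeLie F L)

theorem br_swap₁₂_s14 (a b c : L) : T.br b a c = -T.br a b c := by
  have h := T.alt₁₂ (a + b) c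
  simp only [map_add, LinearMap.add_apply, T.alt₁₂, zero_add, add_zero] at h
  exact eq_neg_of_add_eq_zero_left h

theorem br_swap₂₃_s14 (a b c : L) : T.br a c b = -T.br a b c := by
  have h := T.alt₂₃ a (b + c)
  simp only [map_add, LinearMap.add_apply, T.alt₂₃, zero_add, add_zero] at h
  exact eq_neg_of_add_eq_zero_left h

theorem alt₁₃_s14 (a b : L) : T.br a b a = 0 := by
  rw [T.br_swap₁₂_s14 b a a, T.alt₂₃, neg_zero]

theorem br_mem_of_mem_span {S₁ S₂ S₃ : Set L} {N : Submodule F L}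
    (h : ∀ a ∈ S₁, ∀ b ∈ S₂, ∀ c ∈ S₃, T.br a b c ∈ N) {a b c : L}
    (ha : a ∈ Submodule.span F S₁) (hb : b ∈ Submodule.span F S₂)
    (hc : c ∈ Submodule.span F S₃) : T.br a b c ∈ N := by
  have h₃ : ∀ a ∈ S₁, ∀ b ∈ S₂, Submodule.span F S₃ ≤ N.comap (T.br a b) :=
    fun a ha b hb => Submodule.span_le.2 (h a ha b hb)
  have h₂ : ∀ a ∈ S₁, Submodule.span F S₂ ≤ N.comap ((T.br a).flip c) :=
    fun a ha => Submodule.span_le.2 fun b hb => h₃ a ha b hb hc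
  have h₁ : Submodule.span F S₁ ≤ N.comap ((T.br.flip b).flip c) :=
    Submodule.span_le.2 fun a ha => h₂ a ha hb
  exact h₁ ha

theorem lcs_succ_le {n : ℕ} {N : Submodule F L} (h : ∀ a ∈ T.lcs n, ∀ y z : L, T.br a y z ∈ N) :
    T.lcs (n + 1) ≤ N :=
  Submodule.span_le.2 (by rintro _ ⟨a, ha, y, z, rfl⟩; exact h a ha y z)

theorem finrank_add_one_lt_of_br_ne_zero [FiniteDimensional F L] {J : Submodule F L}
    (hJ : ∀ a ∈ J, ∀ b ∈ J, ∀ c : L, T.br a b c = 0) {a b c : L} (hne : T.br a b c ≠ 0) :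
    finrank F J + 1 < finrank F L := by
  by_contra! hdim
  obtain ⟨w, hw⟩ : ∃ w, w ∉ J := by
    by_contra! hJtop
    exact hne (hJ a (hJtop a) b (hJtop b) c)
  have hlt : J < J ⊔ F ∙ w :=
    lt_of_le_of_ne le_sup_left fun h =>
      hw (h ▸ Submodule.mem_sup_right (Submodule.mem_span_singleton_self w))
  have hspan : Submodule.span F (J ∪ {w}) = ⊤ := by
    rw [Submodule.span_union, Submodule.span_eq]
    have := Submodule.finrank_lt_finrank_of_lt hlt
    exact Submodule.eq_top_of_finrank_eq (by have := Submodule.finrank_le (J ⊔ F ∙ w); omega)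
  refine hne ((Submodule.mem_bot F).1 (T.br_mem_of_mem_span ?_ (hspan ▸ Submodule.mem_top)
    (hspan ▸ Submodule.mem_top) (hspan ▸ Submodule.mem_top)))
  rintro u (hu | rfl) v (hv | rfl) z (hz | rfl) <;> rw [Submodule.mem_bot]
  · exact hJ u hu v hv z
  · exact hJ u hu v hv _
  · rw [T.br_swap₂₃_s14, hJ u hu z hz, neg_zero]
  · exact T.alt₂₃ u _
  · rw [T.br_swap₁₂_s14 v, T.br_swap₂₃_s14, hJ v hv z hz, neg_zero, neg_zero]
  · exact T.alt₁₃_s14 _ v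
  · exact T.alt₁₂ _ z
  · exact T.alt₁₂ _ _

variable {T} in
theorem IsAbelianSubalgebra.finrank_lt [FiniteDimensional F L] {A : Submodule F L}
    (hA : T.IsAbelianSubalgebra A) {a b c : L} (hne : T.br a b c ≠ 0) :
    finrank F A < finrank F L := by
  by_contra! hdim
  obtain rfl := Submodule.eq_top_of_finrank_eq (le_antisymm (Submodule.finrank_le A) hdim)
  exact hne (hA a trivial b trivial c trivial)

structure IsFiliformBasis (T : ThreeLie F L) {m : ℕ} (x : Basis (Fin m) F L) : Prop where
  br_zero_one : ∀ t (ht : t < m) (h3 : 3 ≤ t),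
    T.br (x ⟨0, by omega⟩) (x ⟨1, by omega⟩) (x ⟨t, ht⟩) = x ⟨t - 1, by omega⟩
  br_eq_zero : ∀ i j k : Fin m,
    (¬ ∃ t : ℕ, 3 ≤ t ∧ t < m ∧ ({(i : ℕ), (j : ℕ), (k : ℕ)} : Finset ℕ) = {0, 1, t}) →
    T.br (x i) (x j) (x k) = 0

namespace IsFiliformBasis

variable {T : ThreeLie F L} {m : ℕ} {x : Basis (Fin m) F L}

theorem br_basis_mem (hx : T.IsFiliformBasis x) {N : Submodule F L} (i j k : Fin m)
    (hN : ∀ t (ht : t < m), 3 ≤ t → ({(i : ℕ), (j : ℕ), (k : ℕ)} : Finset ℕ) = {0, 1, t} →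
      x ⟨t - 1, by omega⟩ ∈ N) :
    T.br (x i) (x j) (x k) ∈ N := by
  by_cases h : ∃ t : ℕ, 3 ≤ t ∧ t < m ∧ ({(i : ℕ), (j : ℕ), (k : ℕ)} : Finset ℕ) = {0, 1, t}
  swap
  · rw [hx.br_eq_zero i j k h]
    exact N.zero_mem
  obtain ⟨t, ht3, htm, hijk⟩ := h
  have hmem : T.br (x ⟨0, by omega⟩) (x ⟨1, by omega⟩) (x ⟨t, htm⟩) ∈ N := by
    rw [hx.br_zero_one t htm ht3]
    exact hN t htm ht3 hijk
  have swap₁₂ {a b c : L} (h : T.br a b c ∈ N) : T.br b a c ∈ N := by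
    rw [T.br_swap₁₂_s14]; exact N.neg_mem h
  have swap₂₃ {a b c : L} (h : T.br a b c ∈ N) : T.br a c b ∈ N := by
    rw [T.br_swap₂₃_s14]; exact N.neg_mem h
  obtain ⟨i, hi⟩ := i
  obtain ⟨j, hj⟩ := j
  obtain ⟨k, hk⟩ := k
  simp only [Finset.ext_iff, Finset.mem_insert, Finset.mem_singleton] at hijk
  have h0 := (hijk 0).2 (Or.inl rfl)
  have h1 := (hijk 1).2 (Or.inr (Or.inl rfl))
  have ht := (hijk t).2 (Or.inr (Or.inr rfl))
  rcases (hijk i).1 (Or.inl rfl) with rfl | rfl | rfl <;>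
  rcases (hijk j).1 (Or.inr (Or.inl rfl)) with rfl | rfl | rfl <;>
  rcases (hijk k).1 (Or.inr (Or.inr rfl)) with rfl | rfl | rfl <;>
  first
  | (exfalso; omega)
  | exact hmem
  | exact swap₁₂ hmem
  | exact swap₂₃ hmem
  | exact swap₂₃ (swap₁₂ hmem)
  | exact swap₁₂ (swap₂₃ hmem)
  | exact swap₁₂ (swap₂₃ (swap₁₂ hmem))

theorem br_mem_tailSpan (hx : T.IsFiliformBasis x) {c : ℕ} (hc : c ≤ 2) (a y z : L) :
    T.br a y z ∈ x.tailSpan c := by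
  refine T.br_mem_of_mem_span ?_ (x.mem_span a) (x.mem_span y) (x.mem_span z)
  rintro _ ⟨i, rfl⟩ _ ⟨j, rfl⟩ _ ⟨k, rfl⟩
  exact hx.br_basis_mem i j k fun t ht ht3 _ =>
    Submodule.subset_span ⟨⟨t - 1, by omega⟩, (by omega : c ≤ t - 1), rfl⟩

theorem isIdeal_tailSpan (hx : T.IsFiliformBasis x) {c : ℕ} (hc : c ≤ 2) :
    T.IsIdeal (x.tailSpan c) :=
  fun a _ y z => hx.br_mem_tailSpan hc a y z

theorem lcs_succ_le (hx : T.IsFiliformBasis x) (n : ℕ) :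
    T.lcs (n + 1) ≤
      Submodule.span F {v | ∃ s : Fin m, 2 ≤ (s : ℕ) ∧ (s : ℕ) + n + 2 ≤ m ∧ v = x s} := by
  induction n with
  | zero =>
    refine T.lcs_succ_le fun a _ y z => T.br_mem_of_mem_span ?_ (x.mem_span a) (x.mem_span y)
      (x.mem_span z)
    rintro _ ⟨i, rfl⟩ _ ⟨j, rfl⟩ _ ⟨k, rfl⟩
    exact hx.br_basis_mem i j k fun t ht ht3 _ =>
      Submodule.subset_span ⟨⟨t - 1, by omega⟩, (by omega : 2 ≤ t - 1),
        (by omega : t - 1 + 0 + 2 ≤ m), rfl⟩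
  | succ n ih =>
    refine T.lcs_succ_le fun a ha y z => T.br_mem_of_mem_span ?_ (ih ha) (x.mem_span y)
      (x.mem_span z)
    rintro _ ⟨s, hs2, hsn, rfl⟩ _ ⟨j, rfl⟩ _ ⟨k, rfl⟩
    refine hx.br_basis_mem s j k fun t ht ht3 hsjk => ?_
    have hst : (s : ℕ) ∈ ({0, 1, t} : Finset ℕ) := hsjk ▸ Finset.mem_insert_self _ _
    simp only [Finset.mem_insert, Finset.mem_singleton] at hst
    exact Submodule.subset_span ⟨⟨t - 1, by omega⟩, (by omega : 2 ≤ t - 1),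
      (by omega : t - 1 + (n + 1) + 2 ≤ m), rfl⟩

theorem isNilpotent (hx : T.IsFiliformBasis x) : T.IsNilpotent := by
  refine ⟨m - 2 + 1, eq_bot_iff.2 ((hx.lcs_succ_le (m - 2)).trans (Submodule.span_le.2 ?_))⟩
  rintro _ ⟨s, hs2, hsm, rfl⟩
  omega

theorem isAbelianSubalgebra_tailSpan_one (hx : T.IsFiliformBasis x) :
    T.IsAbelianSubalgebra (x.tailSpan 1) := by
  intro a ha b hb c hc
  refine (Submodule.mem_bot F).1 (T.br_mem_of_mem_span ?_ ha hb hc)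
  rintro _ ⟨i, hi, rfl⟩ _ ⟨j, hj, rfl⟩ _ ⟨k, hk, rfl⟩
  refine hx.br_basis_mem i j k fun t ht ht3 hijk => ?_
  have h0 : 0 ∈ ({(i : ℕ), (j : ℕ), (k : ℕ)} : Finset ℕ) := hijk ▸ Finset.mem_insert_self _ _
  simp only [Finset.mem_insert, Finset.mem_singleton] at h0
  omega

theorem br_tailSpan_two_eq_zero (hx : T.IsFiliformBasis x) {a b : L}
    (ha : a ∈ x.tailSpan 2) (hb : b ∈ x.tailSpan 2) (z : L) : T.br a b z = 0 := by
  refine (Submodule.mem_bot F).1 (T.br_mem_of_mem_span ?_ ha hb (x.mem_span z))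
  rintro _ ⟨i, hi, rfl⟩ _ ⟨j, hj, rfl⟩ _ ⟨k, rfl⟩
  refine hx.br_basis_mem i j k fun t ht ht3 hijk => ?_
  have h0 : 0 ∈ ({(i : ℕ), (j : ℕ), (k : ℕ)} : Finset ℕ) := hijk ▸ Finset.mem_insert_self _ _
  have h1 : 1 ∈ ({(i : ℕ), (j : ℕ), (k : ℕ)} : Finset ℕ) := hijk ▸ by simp
  simp only [Finset.mem_insert, Finset.mem_singleton] at h0 h1
  omega

theorem isAbelianIdeal_tailSpan_two (hx : T.IsFiliformBasis x) :
    T.IsAbelianIdeal (x.tailSpan 2) :=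
  ⟨hx.isIdeal_tailSpan le_rfl, fun _ ha _ hb z => hx.br_tailSpan_two_eq_zero ha hb z⟩

theorem br_one_three_zero (hx : T.IsFiliformBasis x) (hm : 3 < m) :
    T.br (x ⟨1, by omega⟩) (x ⟨3, hm⟩) (x ⟨0, by omega⟩) = x ⟨2, by omega⟩ := by
  rw [T.br_swap₂₃_s14, T.br_swap₁₂_s14, neg_neg, hx.br_zero_one 3 hm le_rfl]

theorem isHypoAbelianIdeal_tailSpan_one (hx : T.IsFiliformBasis x) (hm : 3 < m) :
    T.IsHypoAbelianIdeal (x.tailSpan 1) := by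
  refine ⟨hx.isIdeal_tailSpan (by norm_num), hx.isAbelianSubalgebra_tailSpan_one, fun h => ?_⟩
  have hx₁ : x ⟨1, by omega⟩ ∈ x.tailSpan 1 := Submodule.subset_span ⟨_, le_rfl, rfl⟩
  have hx₃ : x ⟨3, hm⟩ ∈ x.tailSpan 1 := Submodule.subset_span ⟨_, by norm_num, rfl⟩
  exact x.ne_zero _ (hx.br_one_three_zero hm ▸ h _ hx₁ _ hx₃ _)

end IsFiliformBasis

end ThreeLie

/-- the `m`-dimensional 3-Lie algebra (`m ≥ 4`) with nonzero brackets
`[x₁,x₂,x_i] = x_{i−1}` for `4 ≤ i ≤ m` (indices shifted down by one) is nilpotent,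
`A = span{x₂,…,x_m}` is an `(m−1)`-dimensional hypo-abelian ideal,
`I = span{x₃,…,x_m}` is an `(m−2)`-dimensional abelian ideal, `α(L)=m−1`, `β(L)=m−2`. -/
theorem filiform_example {F : Type*} [Field F] {L : Type*} [AddCommGroup L] [Module F L]
    (T : ThreeLie F L) (m : ℕ) (hm : 4 ≤ m) (x : Basis (Fin m) F L)
    (hbr : ∀ i : Fin m, 3 ≤ (i : ℕ) → T.br (x ⟨0, by omega⟩) (x ⟨1, by omega⟩) (x i) = x ⟨(i : ℕ) - 1, by omega⟩)
    (hzero : ∀ i j k : Fin m,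
      (¬ ∃ t : ℕ, 3 ≤ t ∧ t < m ∧ ({(i : ℕ), (j : ℕ), (k : ℕ)} : Finset ℕ) = {0, 1, t}) →
      T.br (x i) (x j) (x k) = 0) :
    T.IsNilpotent ∧
    T.IsHypoAbelianIdeal (Submodule.span F {v | ∃ i : Fin m, 1 ≤ (i : ℕ) ∧ v = x i}) ∧
    finrank F (Submodule.span F {v | ∃ i : Fin m, 1 ≤ (i : ℕ) ∧ v = x i}) + 1 = m ∧
    T.IsAbelianIdeal (Submodule.span F {v | ∃ i : Fin m, 2 ≤ (i : ℕ) ∧ v = x i}) ∧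
    finrank F (Submodule.span F {v | ∃ i : Fin m, 2 ≤ (i : ℕ) ∧ v = x i}) + 2 = m ∧
    (∀ A : Submodule F L, T.IsAbelianSubalgebra A → finrank F A + 1 ≤ m) ∧
    (∀ I : Submodule F L, T.IsAbelianIdeal I → finrank F I + 2 ≤ m) := by
  have hx : T.IsFiliformBasis x := ⟨fun t ht => hbr ⟨t, ht⟩, hzero⟩
  have : FiniteDimensional F L := Module.Finite.of_basis x
  have hL : finrank F L = m := by rw [finrank_eq_card_basis x, Fintype.card_fin]
  have hne : T.br (x ⟨1, by omega⟩) (x ⟨3, by omega⟩) (x ⟨0, by omega⟩) ≠ 0 := by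
    rw [hx.br_one_three_zero hm]
    exact x.ne_zero _
  refine ⟨hx.isNilpotent, hx.isHypoAbelianIdeal_tailSpan_one hm, ?_,
    hx.isAbelianIdeal_tailSpan_two, ?_, fun A hA => ?_, fun I hI => ?_⟩
  · show finrank F (x.tailSpan 1) + 1 = m
    rw [x.finrank_tailSpan]
    omega
  · show finrank F (x.tailSpan 2) + 2 = m
    rw [x.finrank_tailSpan]
    omega
  · have := hA.finrank_lt hne
    omega
  · have := T.finrank_add_one_lt_of_br_ne_zero hI.2 hne
    omega
end
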